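/- arXiv:2108.02106 — 9 statements merged into one kernel-verified Lean document; each statement's English description precedes it below -/
import Mathlib

section
/- Let X and Y be scalable monoids over a ring R, and define the relation ~⊗ on X × Y by: (x₁, y₁) ~⊗ (x₂, y₂) if and only if (α·x₁, β·y₁) = (β·x₂, α·y₂) for some α, β ∈ R. Then ~⊗ is an equivalence relation on X × Y, and moreover (λ·x, y) ~⊗ (x, λ·y) for all x ∈ X, y ∈ Y and λ ∈ R. -/
/-!
Although `R` need not be commutative, scalars commute on a scalable monoid: since
`c • x = x * (c • 1)`, we get `a • (b • x) = (a • x) * (b • 1) = b • (a • x)`.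
This is exactly what transitivity of `~⊗` needs: from witnesses `(α, β)` and `(γ, δ)` one
obtains the witness `(γ * α, β * δ)`.
-/

/-- A scalable monoid over a (unital, associative) ring `R`: a monoid `X` with a scaling
action `• : R × X → X` such that `1 • x = x`, `(a*b) • x = a • (b • x)`, and
`a • (x*y) = (a • x) * y = x * (a • y)`. -/
class ScalableMonoid (R X : Type*) [Ring R] [Monoid X] extends SMul R X where
  one_smul : ∀ x : X, (1 : R) • x = x
  mul_smul : ∀ (a b : R) (x : X), (a * b) • x = a • (b • x)
  smul_mul_assoc : ∀ (a : R) (x y : X), a • (x * y) = (a • x) * y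
  mul_smul_comm : ∀ (a : R) (x y : X), a • (x * y) = x * (a • y)

namespace ScalableMonoid

variable {R X Y : Type*} [Ring R] [Monoid X] [Monoid Y] [ScalableMonoid R X]
  [ScalableMonoid R Y]

theorem smul_eq_mul_smul_one (c : R) (x : X) : c • x = x * (c • (1 : X)) := by
  conv_lhs => rw [← mul_one x, mul_smul_comm]

theorem smul_smul_comm (a b : R) (x : X) : a • (b • x) = b • (a • x) := by
  rw [smul_eq_mul_smul_one b x, smul_mul_assoc, ← smul_eq_mul_smul_one]

variable (R X Y) in
def TensorRel (p q : X × Y) : Prop :=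
  ∃ α β : R, (α • p.1, β • p.2) = (β • q.1, α • q.2)

theorem tensorRel_iff {p q : X × Y} :
    TensorRel R X Y p q ↔ ∃ α β : R, α • p.1 = β • q.1 ∧ β • p.2 = α • q.2 := by
  simp only [TensorRel, Prod.mk.injEq]

theorem TensorRel.symm {p q : X × Y} (h : TensorRel R X Y p q) : TensorRel R X Y q p := by
  obtain ⟨α, β, h₁, h₂⟩ := tensorRel_iff.mp h
  exact tensorRel_iff.mpr ⟨β, α, h₁.symm, h₂.symm⟩

theorem TensorRel.trans {p q r : X × Y} (hpq : TensorRel R X Y p q)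
    (hqr : TensorRel R X Y q r) : TensorRel R X Y p r := by
  obtain ⟨α, β, h₁, h₂⟩ := tensorRel_iff.mp hpq
  obtain ⟨γ, δ, h₃, h₄⟩ := tensorRel_iff.mp hqr
  refine tensorRel_iff.mpr ⟨γ * α, β * δ, ?_, ?_⟩
  · calc (γ * α) • p.1 = γ • (β • q.1) := by rw [mul_smul, h₁]
      _ = β • (δ • r.1) := by rw [smul_smul_comm, h₃]
      _ = (β * δ) • r.1 := (mul_smul β δ r.1).symm
  · calc (β * δ) • p.2 = δ • (α • q.2) := by rw [mul_smul, smul_smul_comm, h₂]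
      _ = α • (γ • r.2) := by rw [smul_smul_comm, h₄]
      _ = (γ * α) • r.2 := by rw [smul_smul_comm, mul_smul]

theorem tensorRel_equivalence : Equivalence (TensorRel R X Y) :=
  ⟨fun _ => ⟨1, 1, rfl⟩, TensorRel.symm, TensorRel.trans⟩

theorem tensorRel_smul_fst_smul_snd (x : X) (y : Y) (c : R) :
    TensorRel R X Y (c • x, y) (x, c • y) :=
  tensorRel_iff.mpr ⟨1, c, one_smul _, (one_smul _).symm⟩

end ScalableMonoid

/-- The tensor relation on `X × Y` is an equivalence relation, and
`(λ • x, y) ~⊗ (x, λ • y)`. -/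
theorem stmt3 {R X Y : Type*} [Ring R] [Monoid X] [Monoid Y]
    [ScalableMonoid R X] [ScalableMonoid R Y] :
    Equivalence (fun p q : X × Y =>
      ∃ α β : R, (α • p.1, β • p.2) = (β • q.1, α • q.2)) ∧
    ∀ (x : X) (y : Y) (lam : R),
      ∃ α β : R, (α • (lam • x), β • y) = (β • x, α • (lam • y)) :=
  ⟨ScalableMonoid.tensorRel_equivalence, ScalableMonoid.tensorRel_smul_fst_smul_snd⟩
end

section
/- Let X be a scalable monoid over a ring R. For every x ∈ X, the element 0·x is commensurable with x, and 0·x depends only on the orbitoid of x: if x ~ y then 0·x = 0·y. Hence each orbitoid C contains a unique element z (its zero element) satisfying z = 0·x for all x ∈ C. -/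
/-! Since `0 = 0 * α`, scaling by `0` absorbs every earlier scaling, so `0 • x` is constant
along commensurability; and `1 • (0 • x) = 0 • x` shows that `0 • x` is commensurable with `x`. -/

namespace ScalableMonoid

variable (R : Type*) {X : Type*} [Ring R] [Monoid X] [ScalableMonoid R X]

def Commensurable (x y : X) : Prop := ∃ α β : R, α • x = β • y

variable {R}

theorem commensurable_refl (x : X) : Commensurable R x x := ⟨1, 1, rfl⟩

theorem Commensurable.symm {x y : X} : Commensurable R x y → Commensurable R y x :=
  fun ⟨α, β, h⟩ => ⟨β, α, h.symm⟩

theorem zero_smul_smul (α : R) (x : X) : (0 : R) • α • x = (0 : R) • x := by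
  rw [← ScalableMonoid.mul_smul, zero_mul]

theorem zero_smul_commensurable (x : X) : Commensurable R ((0 : R) • x) x :=
  ⟨1, 0, ScalableMonoid.one_smul _⟩

theorem Commensurable.zero_smul_eq {x y : X} (h : Commensurable R x y) :
    (0 : R) • x = (0 : R) • y := by
  obtain ⟨α, β, hαβ⟩ := h
  rw [← zero_smul_smul α x, hαβ, zero_smul_smul]

end ScalableMonoid

/-- `0 • x` is commensurable with `x`; it depends only on the orbitoid of `x`; hence
each orbitoid contains a unique element `z` with `z = 0 • y` for all `y` in the orbitoid. -/
theorem stmt7 {R X : Type*} [Ring R] [Monoid X] [ScalableMonoid R X] :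
    (∀ x : X, ∃ α β : R, α • ((0 : R) • x) = β • x) ∧
    (∀ x y : X, (∃ α β : R, α • x = β • y) → (0 : R) • x = (0 : R) • y) ∧
    (∀ x : X, ∃! z : X, (∃ α β : R, α • z = β • x) ∧
      ∀ y : X, (∃ α β : R, α • y = β • x) → z = (0 : R) • y) := by
  refine ⟨ScalableMonoid.zero_smul_commensurable,
    fun _ _ => ScalableMonoid.Commensurable.zero_smul_eq, fun x => ?_⟩
  refine ⟨(0 : R) • x, ⟨ScalableMonoid.zero_smul_commensurable x, fun y hy => ?_⟩, ?_⟩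
  · exact (ScalableMonoid.Commensurable.zero_smul_eq hy).symm
  · rintro z ⟨-, hz⟩
    exact hz x (ScalableMonoid.commensurable_refl x)
end

section
/- Let X be a scalable monoid over a ring R, and let u and u' both be unit elements for the same orbitoid C. If ρ·u = ρ'·u' and σ·u = σ'·u' for ρ, σ, ρ', σ' ∈ R, then (ρ+σ)·u = (ρ'+σ')·u'. (Hence the sum of two commensurable elements defined via a unit element is independent of the choice of unit element.) -/
namespace ScalableMonoid

variable {R X : Type*} [Ring R] [Monoid X] [ScalableMonoid R X]

theorem eq_mul_of_smul_eq_smul {u u' : X} {μ : R} (hu_inj : Function.Injective (· • u : R → X))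
    (hμ : u' = μ • u) {c c' : R} (h : c • u = c' • u') : c = c' * μ :=
  hu_inj <| by simp only [h, hμ, ScalableMonoid.mul_smul]

end ScalableMonoid

theorem stmt8_general {R X : Type*} [Ring R] [Monoid X] [ScalableMonoid R X]
    (u u' : X)
    (hu_gen : ∀ x : X, (∃ α β : R, α • x = β • u) → ∃ lam : R, x = lam • u)
    (hu_inj : ∀ lam lam' : R, lam • u = lam' • u → lam = lam')
    (huu' : ∃ α β : R, α • u = β • u')
    (ρ σ ρ' σ' : R) (hρ : ρ • u = ρ' • u') (hσ : σ • u = σ' • u') :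
    (ρ + σ) • u = (ρ' + σ') • u' := by
  obtain ⟨α, β, hαβ⟩ := huu'
  obtain ⟨μ, hμ⟩ := hu_gen u' ⟨β, α, hαβ.symm⟩
  have hu_inj' : Function.Injective (· • u : R → X) := fun _ _ h => hu_inj _ _ h
  rw [ScalableMonoid.eq_mul_of_smul_eq_smul hu_inj' hμ hρ,
    ScalableMonoid.eq_mul_of_smul_eq_smul hu_inj' hμ hσ, ← add_mul, ScalableMonoid.mul_smul, ← hμ]

/-- If `u` and `u'` are both unit elements for the same orbitoid, `ρ • u = ρ' • u'` and
`σ • u = σ' • u'`, then `(ρ + σ) • u = (ρ' + σ') • u'`. -/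
theorem stmt8 {R X : Type*} [Ring R] [Monoid X] [ScalableMonoid R X]
    (u u' : X)
    (hu_gen : ∀ x : X, (∃ α β : R, α • x = β • u) → ∃ lam : R, x = lam • u)
    (hu_inj : ∀ lam lam' : R, lam • u = lam' • u → lam = lam')
    (hu'_gen : ∀ x : X, (∃ α β : R, α • x = β • u') → ∃ lam : R, x = lam • u')
    (hu'_inj : ∀ lam lam' : R, lam • u' = lam' • u' → lam = lam')
    (huu' : ∃ α β : R, α • u = β • u')
    (ρ σ ρ' σ' : R) (hρ : ρ • u = ρ' • u') (hσ : σ • u = σ' • u') :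
    (ρ + σ) • u = (ρ' + σ') • u' :=
  stmt8_general u u' hu_gen hu_inj huu' ρ σ ρ' σ' hρ hσ
end

section
/- Let Q be a quantity space over a field K with basis {e_1, …, e_n}, and let x ∈ Q have expansion x = μ·(e_1^{k_1}⋯e_n^{k_n}). Then the following are equivalent: (1) x is non-zero (0·x ≠ x); (2) μ ≠ 0; (3) x is invertible in Q. -/
/-- A finite quantity-space basis for a commutative scalable monoid `Q` over a field `K`:
a finite family `e₁, …, eₙ` of invertible elements of `Q` such that every `x ∈ Q` has a
unique expansion `x = μ • (e₁^{k₁} ⋯ eₙ^{kₙ})` with `μ ∈ K` and integers `kᵢ`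
(negative powers taken via inverses, i.e. in the group of units). -/
def IsQBasis (K : Type*) {Q : Type*} [Field K] [CommMonoid Q] [ScalableMonoid K Q]
    {n : ℕ} (e : Fin n → Qˣ) : Prop :=
  ∀ x : Q, ∃! p : K × (Fin n → ℤ),
    x = p.1 • (((∏ i, (e i) ^ (p.2 i)) : Qˣ) : Q)

/-! An expansion `μ • E` is a zero element exactly when `0 • (μ • E) = (0 * μ) • E` is the
same expansion as `μ • E`, i.e. when `μ = 0` by uniqueness of coefficients. A non-zero
expansion is invertible with inverse `μ⁻¹ • E⁻¹`. Conversely, if a zero element `x` were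
invertible, then `0 • 1 = (0 • x) * x⁻¹ = 1`; but `1 = 1 • e^0` has coefficient `1 ≠ 0`. -/

namespace ScalableMonoid

variable {R X : Type*} [Ring R] [Monoid X] [ScalableMonoid R X]

theorem smul_smul (a b : R) (x : X) : a • b • x = (a * b) • x :=
  (ScalableMonoid.mul_smul a b x).symm

theorem smul_mul_smul (a b : R) (x y : X) : (a • x) * (b • y) = (a * b) • (x * y) := by
  rw [← ScalableMonoid.smul_mul_assoc, ← ScalableMonoid.mul_smul_comm,
    ScalableMonoid.smul_smul]

theorem isUnit_smul {a : R} {x : X} (ha : IsUnit a) (hx : IsUnit x) : IsUnit (a • x) := by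
  obtain ⟨a, rfl⟩ := ha
  obtain ⟨x, rfl⟩ := hx
  refine ⟨⟨(a : R) • (x : X), ((a⁻¹ : Rˣ) : R) • ((x⁻¹ : Xˣ) : X), ?_, ?_⟩, rfl⟩
  · rw [ScalableMonoid.smul_mul_smul, Units.mul_inv, Units.mul_inv, ScalableMonoid.one_smul]
  · rw [ScalableMonoid.smul_mul_smul, Units.inv_mul, Units.inv_mul, ScalableMonoid.one_smul]

theorem zero_smul_one_of_isUnit {x : X} (hx : IsUnit x) (h : (0 : R) • x = x) :
    (0 : R) • (1 : X) = 1 := by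
  obtain ⟨u, rfl⟩ := hx
  calc (0 : R) • (1 : X) = ((0 : R) • (u : X)) * ((u⁻¹ : Xˣ) : X) := by
        rw [← ScalableMonoid.smul_mul_assoc, Units.mul_inv]
    _ = 1 := by rw [h, Units.mul_inv]

end ScalableMonoid

namespace IsQBasis

variable {K Q : Type*} [Field K] [CommMonoid Q] [ScalableMonoid K Q] {n : ℕ} {e : Fin n → Qˣ}

theorem coeff_eq (he : IsQBasis K e) {μ ν : K} {k l : Fin n → ℤ}
    (h : μ • (((∏ i, e i ^ k i) : Qˣ) : Q) = ν • (((∏ i, e i ^ l i) : Qˣ) : Q)) :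
    μ = ν :=
  congrArg Prod.fst ((he _).unique (y₁ := (μ, k)) (y₂ := (ν, l)) rfl h)

theorem zero_smul_eq_self_iff (he : IsQBasis K e) (μ : K) (k : Fin n → ℤ) :
    (0 : K) • μ • (((∏ i, e i ^ k i) : Qˣ) : Q) = μ • (((∏ i, e i ^ k i) : Qˣ) : Q) ↔
      μ = 0 := by
  rw [ScalableMonoid.smul_smul, zero_mul]
  exact ⟨fun h => (he.coeff_eq h).symm, fun hμ => by rw [hμ]⟩

theorem zero_smul_one_ne_one (he : IsQBasis K e) : (0 : K) • (1 : Q) ≠ 1 := by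
  have h1 : (1 : Q) = (1 : K) • (((∏ i, e i ^ (0 : Fin n → ℤ) i) : Qˣ) : Q) := by
    simp only [Pi.zero_apply, zpow_zero, Finset.prod_const_one, Units.val_one,
      ScalableMonoid.one_smul]
  rw [h1]
  exact fun h => one_ne_zero ((he.zero_smul_eq_self_iff 1 0).1 h)

end IsQBasis

/-- In a quantity space, for `x = μ • (e₁^{k₁}⋯eₙ^{kₙ})` the following are equivalent:
`x` is non-zero (`0 • x ≠ x`), `μ ≠ 0`, and `x` is invertible. -/
theorem stmt11 {K Q : Type*} [Field K] [CommMonoid Q] [ScalableMonoid K Q]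
    {n : ℕ} (e : Fin n → Qˣ) (he : IsQBasis K e)
    (x : Q) (μ : K) (k : Fin n → ℤ)
    (hx : x = μ • (((∏ i, (e i) ^ (k i)) : Qˣ) : Q)) :
    ((0 : K) • x ≠ x ↔ μ ≠ 0) ∧ (μ ≠ 0 ↔ IsUnit x) := by
  subst hx
  have hzero := he.zero_smul_eq_self_iff μ k
  refine ⟨hzero.not, fun hμ => ScalableMonoid.isUnit_smul hμ.isUnit (Units.isUnit _),
    fun hunit hμ => he.zero_smul_one_ne_one ?_⟩
  exact ScalableMonoid.zero_smul_one_of_isUnit hunit (hzero.2 hμ)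
end

section
/- Let Q be a quantity space over a field K. Every non-zero u ∈ Q is a unit element for its orbitoid [u]: for every x ∈ Q with x ~ u there exists a unique λ ∈ K such that x = λ·u. -/
section

variable {K Q : Type*} [Field K] [CommMonoid Q] [ScalableMonoid K Q]

def basisMonomial {n : ℕ} (e : Fin n → Qˣ) (k : Fin n → ℤ) : Q :=
  ((∏ i, e i ^ k i : Qˣ) : Q)

namespace IsQBasis

variable {n : ℕ} {e : Fin n → Qˣ}

noncomputable def repr (hb : IsQBasis K e) (x : Q) : K × (Fin n → ℤ) :=
  (hb x).exists.choose

theorem eq_repr_smul (hb : IsQBasis K e) (x : Q) :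
    x = (hb.repr x).1 • basisMonomial e (hb.repr x).2 :=
  (hb x).exists.choose_spec

theorem repr_eq_of_eq_smul (hb : IsQBasis K e) {x : Q} {μ : K} {k : Fin n → ℤ}
    (h : x = μ • basisMonomial e k) : hb.repr x = (μ, k) :=
  (hb x).unique (hb.eq_repr_smul x) h

theorem repr_smul (hb : IsQBasis K e) (a : K) (x : Q) :
    hb.repr (a • x) = (a * (hb.repr x).1, (hb.repr x).2) := by
  refine hb.repr_eq_of_eq_smul ?_
  conv_lhs => rw [hb.eq_repr_smul x]
  rw [ScalableMonoid.mul_smul]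

theorem repr_exponents_eq_of_smul_eq_smul (hb : IsQBasis K e) {x y : Q} {α β : K}
    (h : α • x = β • y) : (hb.repr x).2 = (hb.repr y).2 := by
  simpa only [hb.repr_smul] using congrArg (fun z => (hb.repr z).2) h

theorem repr_injective (hb : IsQBasis K e) : Function.Injective hb.repr := by
  intro x y h
  rw [hb.eq_repr_smul x, hb.eq_repr_smul y, h]

theorem repr_coeff_ne_zero (hb : IsQBasis K e) {u : Q} (hu : (0 : K) • u ≠ u) :
    (hb.repr u).1 ≠ 0 := by
  intro h0
  apply hu
  apply hb.repr_injective
  rw [hb.repr_smul, zero_mul, ← h0]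

theorem smul_left_injective (hb : IsQBasis K e) {u : Q} (hu : (0 : K) • u ≠ u) :
    Function.Injective (fun a : K => a • u) := by
  intro a b hab
  have hcoeff := congrArg (fun z => (hb.repr z).1) hab
  simp only [hb.repr_smul] at hcoeff
  exact mul_right_cancel₀ (hb.repr_coeff_ne_zero hu) hcoeff

theorem eq_smul_of_smul_eq_smul (hb : IsQBasis K e) {u x : Q} (hu : (0 : K) • u ≠ u)
    {α β : K} (h : α • x = β • u) :
    x = ((hb.repr x).1 * (hb.repr u).1⁻¹) • u := by
  apply hb.repr_injective
  rw [hb.repr_smul, inv_mul_cancel_right₀ (hb.repr_coeff_ne_zero hu),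
    ← hb.repr_exponents_eq_of_smul_eq_smul h]

end IsQBasis

end

/-- In a quantity space, every non-zero `u` is a unit element for its orbitoid: every `x`
commensurable with `u` has a unique expression `x = λ • u`. -/
theorem stmt13 {K Q : Type*} [Field K] [CommMonoid Q] [ScalableMonoid K Q]
    (hQ : ∃ (n : ℕ) (e : Fin n → Qˣ), IsQBasis K e)
    (u : Q) (hu : (0 : K) • u ≠ u) :
    ∀ x : Q, (∃ α β : K, α • x = β • u) → ∃! lam : K, x = lam • u := by
  obtain ⟨n, e, hb⟩ := hQ
  rintro x ⟨α, β, h⟩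
  have hx := hb.eq_smul_of_smul_eq_smul hu h
  exact ⟨_, hx, fun lam hlam => hb.smul_left_injective hu (hlam.symm.trans hx)⟩
end

section
/- Let Q be a quantity space over a field K. For every x ∈ Q with x ~ 1_Q, the measure of x is independent of the choice of basis: if E and E' are any two bases for Q then μ_E(x) = μ_{E'}(x); indeed x = λ·1_Q for a unique λ ∈ K and μ_E(x) = λ for every basis E. -/
namespace IsQBasis

variable {K Q : Type*} [Field K] [CommMonoid Q] [ScalableMonoid K Q] {n : ℕ} {e : Fin n → Qˣ}

theorem expansion_injective (he : IsQBasis K e) {μ₁ μ₂ : K} {k₁ k₂ : Fin n → ℤ}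
    (h : μ₁ • (((∏ i, e i ^ k₁ i) : Qˣ) : Q) =
      μ₂ • (((∏ i, e i ^ k₂ i) : Qˣ) : Q)) :
    μ₁ = μ₂ ∧ k₁ = k₂ := by
  obtain ⟨_, -, huniq⟩ := he (μ₂ • (((∏ i, e i ^ k₂ i) : Qˣ) : Q))
  have hpair : ((μ₁, k₁) : K × (Fin n → ℤ)) = (μ₂, k₂) :=
    (huniq (μ₁, k₁) h.symm).trans (huniq (μ₂, k₂) rfl).symm
  exact Prod.mk.inj hpair

theorem expansion_eq_smul_one_iff (he : IsQBasis K e) {μ lam : K} {k : Fin n → ℤ} :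
    μ • (((∏ i, e i ^ k i) : Qˣ) : Q) = lam • (1 : Q) ↔ μ = lam ∧ k = 0 := by
  have hone : (((∏ i, e i ^ (0 : Fin n → ℤ) i) : Qˣ) : Q) = 1 := by simp
  constructor
  · intro h
    exact he.expansion_injective (h.trans (by rw [hone]))
  · rintro ⟨rfl, rfl⟩
    rw [hone]

theorem smul_one_injective (he : IsQBasis K e) :
    Function.Injective (fun lam : K ↦ lam • (1 : Q)) := by
  intro lam lam' h
  have hexp : lam • (((∏ i, e i ^ (0 : Fin n → ℤ) i) : Qˣ) : Q) = lam' • (1 : Q) := by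
    simpa using h
  exact (he.expansion_eq_smul_one_iff.mp hexp).1

/-- The exponent vector of `x` is forced to be `0` by comparing the two expansions
of `α • x`. -/
theorem exists_eq_smul_one_of_smul_eq (he : IsQBasis K e) {x : Q} {α β : K}
    (h : α • x = β • (1 : Q)) : ∃ lam : K, x = lam • (1 : Q) := by
  obtain ⟨⟨μ, k⟩, hx, -⟩ := he x
  have hαx : (α * μ) • (((∏ i, e i ^ k i) : Qˣ) : Q) = β • (1 : Q) := by
    rw [ScalableMonoid.mul_smul, ← hx, h]
  obtain ⟨-, rfl⟩ := he.expansion_eq_smul_one_iff.mp hαx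
  exact ⟨μ, hx.trans (by simp)⟩

end IsQBasis

/-- For `x ~ 1_Q`, the measure of `x` is basis-independent: `x = λ • 1_Q` for a unique
`λ ∈ K`, and relative to every basis the measure of `x` equals `λ`. -/
theorem stmt16 {K Q : Type*} [Field K] [CommMonoid Q] [ScalableMonoid K Q]
    (hQ : ∃ (n : ℕ) (e : Fin n → Qˣ), IsQBasis K e)
    (x : Q) (hx : ∃ α β : K, α • x = β • (1 : Q)) :
    ∃ lam : K, x = lam • (1 : Q) ∧ (∀ lam' : K, x = lam' • (1 : Q) → lam' = lam) ∧
      ∀ (m : ℕ) (e : Fin m → Qˣ), IsQBasis K e →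
        ∀ (μ : K) (k : Fin m → ℤ),
          x = μ • (((∏ i, (e i) ^ (k i)) : Qˣ) : Q) → μ = lam := by
  obtain ⟨n, e, he⟩ := hQ
  obtain ⟨α, β, hαβ⟩ := hx
  obtain ⟨lam, rfl⟩ := he.exists_eq_smul_one_of_smul_eq hαβ
  exact ⟨lam, rfl, fun lam' h ↦ he.smul_one_injective h.symm,
    fun m e' he' μ k h ↦ (he'.expansion_eq_smul_one_iff.mp h.symm).1⟩
end

section
/- Let Q be a quantity space over a field K. For every x ∈ Q there exists y ∈ Q such that xy ~ 1_Q. Consequently the quotient monoid Q/~ of orbitoids, with multiplication [x][y] = [xy] and identity [1_Q], is an abelian group. -/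
/-- The commensurability relation `x ~ y ↔ ∃ α β, α • x = β • y` as a multiplicative
congruence on a commutative scalable monoid over a field. Its quotient is the monoid
of orbitoids `Q/~`, with `[x][y] = [xy]` and identity `[1]`. -/
def commensurabilityCon (K Q : Type*) [Field K] [CommMonoid Q] [ScalableMonoid K Q] :
    Con Q where
  r x y := ∃ α β : K, α • x = β • y
  iseqv := by
    constructor
    · intro x
      exact ⟨1, 1, rfl⟩
    · rintro x y ⟨a, b, h⟩
      exact ⟨b, a, h.symm⟩
    · rintro x y z ⟨a, b, h1⟩ ⟨c, d, h2⟩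
      refine ⟨c * a, b * d, ?_⟩
      calc (c * a) • x = c • (a • x) := ScalableMonoid.mul_smul c a x
        _ = c • (b • y) := by rw [h1]
        _ = (c * b) • y := (ScalableMonoid.mul_smul c b y).symm
        _ = (b * c) • y := by rw [mul_comm]
        _ = b • (c • y) := ScalableMonoid.mul_smul b c y
        _ = b • (d • z) := by rw [h2]
        _ = (b * d) • z := (ScalableMonoid.mul_smul b d z).symm
  mul' := by
    rintro w x y z ⟨a, b, h1⟩ ⟨c, d, h2⟩
    refine ⟨a * c, b * d, ?_⟩
    calc (a * c) • (w * y) = a • (c • (w * y)) := ScalableMonoid.mul_smul a c (w * y)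
      _ = a • (w * (c • y)) := by rw [ScalableMonoid.mul_smul_comm c w y]
      _ = a • (w * (d • z)) := by rw [h2]
      _ = (a • w) * (d • z) := ScalableMonoid.smul_mul_assoc a w (d • z)
      _ = (b • x) * (d • z) := by rw [h1]
      _ = b • (x * (d • z)) := (ScalableMonoid.smul_mul_assoc b x (d • z)).symm
      _ = b • (d • (x * z)) := by rw [ScalableMonoid.mul_smul_comm d x z]
      _ = (b * d) • (x * z) := (ScalableMonoid.mul_smul b d (x * z)).symm

theorem ScalableMonoid.smul_unit_mul_inv {R X : Type*} [Ring R] [Monoid X]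
    [ScalableMonoid R X] (μ : R) (u : Xˣ) : μ • (u : X) * ↑u⁻¹ = μ • (1 : X) := by
  rw [← ScalableMonoid.smul_mul_assoc, Units.mul_inv]

section IsQBasis

variable {K Q : Type*} [Field K] [CommMonoid Q] [ScalableMonoid K Q] {n : ℕ} {e : Fin n → Qˣ}

theorem IsQBasis.exists_eq_smul_unit (hb : IsQBasis K e) (x : Q) :
    ∃ (μ : K) (u : Qˣ), x = μ • (u : Q) :=
  let ⟨⟨μ, _⟩, hx, _⟩ := hb x
  ⟨μ, _, hx⟩

theorem IsQBasis.exists_mul_commensurable_one (hb : IsQBasis K e) (x : Q) :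
    ∃ y : Q, commensurabilityCon K Q (x * y) 1 := by
  obtain ⟨μ, u, rfl⟩ := hb.exists_eq_smul_unit x
  exact ⟨↑u⁻¹, 1, μ, by rw [ScalableMonoid.one_smul, ScalableMonoid.smul_unit_mul_inv]⟩

end IsQBasis

/-- In a quantity space `Q`, every `x` has a `y` with `xy ~ 1_Q`; consequently the
quotient monoid `Q/~` of orbitoids is an abelian group (it is a commutative monoid,
and every element has a two-sided inverse). -/
theorem stmt17 {K Q : Type*} [Field K] [CommMonoid Q] [ScalableMonoid K Q]
    (hQ : ∃ (n : ℕ) (e : Fin n → Qˣ), IsQBasis K e) :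
    (∀ x : Q, ∃ y : Q, ∃ α β : K, α • (x * y) = β • (1 : Q)) ∧
    (∀ q : (commensurabilityCon K Q).Quotient, ∃ r, q * r = 1 ∧ r * q = 1) := by
  obtain ⟨n, e, hb⟩ := hQ
  refine ⟨hb.exists_mul_commensurable_one, fun q => ?_⟩
  induction q using Con.induction_on with
  | H x =>
    obtain ⟨y, hxy⟩ := hb.exists_mul_commensurable_one x
    have h : (x * y : (commensurabilityCon K Q).Quotient) = 1 := (Con.eq _).mpr hxy
    exact ⟨y, h, by rwa [mul_comm] at h⟩
end

section
/- Let Q be a quantity space over a field K with basis {e_1, …, e_n}. Then the orbitoids [e_1], …, [e_n] form a basis of cardinality n for the group Q/~: the map e_i ↦ [e_i] is injective, and for every x ∈ Q there exist unique integers k_1, …, k_n such that x ~ e_1^{k_1}⋯e_n^{k_n} (i.e., [x] = [e_1]^{k_1}⋯[e_n]^{k_n}). -/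
/-!
A basis expansion `x = μ • e^k` is unique, so `α • e^k = β • e^k'` are two expansions of one
element and force `k = k'`: the exponent vector is an invariant of the orbitoid of `e^k`.
Applied to `eᵢ = e^(δᵢ)` this separates the `[eᵢ]`, and applied to the expansion of `x` it makes
the exponents of `[x]` unique.
-/

def Commensurable (R : Type*) {X : Type*} [Ring R] [Monoid X] [ScalableMonoid R X]
    (x y : X) : Prop :=
  ∃ α β : R, α • x = β • y

theorem Fintype.prod_zpow_single_one {ι G : Type*} [Fintype ι] [DecidableEq ι] [CommGroup G]
    (e : ι → G) (i : ι) : ∏ m, e m ^ (Pi.single i 1 : ι → ℤ) m = e i := by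
  rw [Fintype.prod_eq_single i fun m hm => by simp [Pi.single_eq_of_ne hm]]
  simp

namespace IsQBasis

variable {K Q : Type*} [Field K] [CommMonoid Q] [ScalableMonoid K Q] {n : ℕ} {e : Fin n → Qˣ}

theorem exponents_eq_of_commensurable (he : IsQBasis K e) {k k' : Fin n → ℤ}
    (h : Commensurable K ((∏ i, e i ^ k i : Qˣ) : Q) ((∏ i, e i ^ k' i : Qˣ) : Q)) :
    k = k' := by
  obtain ⟨α, β, h⟩ := h
  obtain ⟨_, _, unique⟩ := he (α • ((∏ i, e i ^ k i : Qˣ) : Q))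
  exact congrArg Prod.snd ((unique (α, k) rfl).trans (unique (β, k') h).symm)

theorem eq_of_commensurable (he : IsQBasis K e) {i j : Fin n}
    (h : Commensurable K (e i : Q) (e j : Q)) : i = j := by
  rw [← Fintype.prod_zpow_single_one e i, ← Fintype.prod_zpow_single_one e j] at h
  have hδ := congrFun (he.exponents_eq_of_commensurable h) i
  by_contra hne
  simp [Pi.single_eq_of_ne hne] at hδ

theorem existsUnique_commensurable_prod (he : IsQBasis K e) (x : Q) :
    ∃! k : Fin n → ℤ, Commensurable K x ((∏ i, e i ^ k i : Qˣ) : Q) := by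
  obtain ⟨⟨μ, k⟩, hx, -⟩ := he x
  refine ⟨k, ⟨1, μ, by rw [ScalableMonoid.one_smul, hx]⟩, ?_⟩
  rintro k' ⟨α, β, hk'⟩
  rw [hx, ← ScalableMonoid.mul_smul] at hk'
  exact (he.exponents_eq_of_commensurable ⟨_, _, hk'⟩).symm

end IsQBasis

/-- The orbitoids `[e₁], …, [eₙ]` of the basis elements form a basis of cardinality `n`
for the group `Q/~`: the map `i ↦ [eᵢ]` is injective, and every `x` satisfies
`x ~ e₁^{k₁}⋯eₙ^{kₙ}` for unique integers `k₁, …, kₙ`. -/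
theorem stmt18 {K Q : Type*} [Field K] [CommMonoid Q] [ScalableMonoid K Q]
    {n : ℕ} (e : Fin n → Qˣ) (he : IsQBasis K e) :
    (∀ i j : Fin n, (∃ α β : K, α • ((e i : Q)) = β • ((e j : Q))) → i = j) ∧
    (∀ x : Q, ∃! k : Fin n → ℤ,
      ∃ α β : K, α • x = β • (((∏ i, (e i) ^ (k i)) : Qˣ) : Q)) :=
  ⟨fun _ _ => he.eq_of_commensurable, he.existsUnique_commensurable_prod⟩
end

section
/- Let Q be a quantity space over a field K. Any two bases for Q have the same cardinality: if {e_1, …, e_n} and {e'_1, …, e'_m} are both quantity-space bases for Q, then n = m. -/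
/-! Relative to a basis `e`, the exponent vector of the unique expansion of `x` turns
multiplication into addition and ignores scalars. Reading the monomials of one basis in the
other basis therefore gives mutually inverse additive maps between `ℤⁿ` and `ℤᵐ`, and the ranks of
these free abelian groups agree. -/

section Monomial

variable {Q : Type*} [CommMonoid Q] {n : ℕ}

noncomputable def monomial (e : Fin n → Qˣ) (k : Fin n → ℤ) : Q :=
  ((∏ i, e i ^ k i : Qˣ) : Q)

theorem monomial_add (e : Fin n → Qˣ) (a b : Fin n → ℤ) :
    monomial e (a + b) = monomial e a * monomial e b := by
  simp only [monomial, ← Units.val_mul, ← Finset.prod_mul_distrib, Pi.add_apply, zpow_add]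

end Monomial

namespace IsQBasis

variable {K Q : Type*} [Field K] [CommMonoid Q] [ScalableMonoid K Q] {n m : ℕ}
  {e : Fin n → Qˣ} {e' : Fin m → Qˣ}

noncomputable def coeff (he : IsQBasis K e) (x : Q) : K :=
  (he x).choose.1

noncomputable def exponents (he : IsQBasis K e) (x : Q) : Fin n → ℤ :=
  (he x).choose.2

theorem eq_coeff_smul_monomial (he : IsQBasis K e) (x : Q) :
    x = he.coeff x • monomial e (he.exponents x) :=
  (he x).choose_spec.1

theorem exponents_eq_of_eq_smul_monomial (he : IsQBasis K e) {x : Q} (μ : K)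
    (k : Fin n → ℤ) (h : x = μ • monomial e k) : he.exponents x = k :=
  (congrArg Prod.snd ((he x).choose_spec.2 (μ, k) h)).symm

theorem exponents_monomial (he : IsQBasis K e) (k : Fin n → ℤ) :
    he.exponents (monomial e k) = k :=
  he.exponents_eq_of_eq_smul_monomial 1 k (ScalableMonoid.one_smul _).symm

theorem exponents_smul (he : IsQBasis K e) (μ : K) (x : Q) :
    he.exponents (μ • x) = he.exponents x :=
  he.exponents_eq_of_eq_smul_monomial (μ * he.coeff x) (he.exponents x) <| by
    rw [ScalableMonoid.mul_smul, ← he.eq_coeff_smul_monomial x]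

theorem exponents_mul (he : IsQBasis K e) (x y : Q) :
    he.exponents (x * y) = he.exponents x + he.exponents y := by
  set a := he.coeff x
  set b := he.coeff y
  refine he.exponents_eq_of_eq_smul_monomial (a * b) _ ?_
  calc x * y = (a • monomial e (he.exponents x)) * (b • monomial e (he.exponents y)) := by
        rw [← he.eq_coeff_smul_monomial x, ← he.eq_coeff_smul_monomial y]
    _ = a • b • (monomial e (he.exponents x) * monomial e (he.exponents y)) := by
        rw [← ScalableMonoid.smul_mul_assoc, ← ScalableMonoid.mul_smul_comm]
    _ = (a * b) • monomial e (he.exponents x + he.exponents y) := by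
        rw [ScalableMonoid.mul_smul, monomial_add]

theorem exponents_monomial_exponents (he : IsQBasis K e) (he' : IsQBasis K e') (x : Q) :
    he.exponents (monomial e' (he'.exponents x)) = he.exponents x := by
  conv_rhs => rw [he'.eq_coeff_smul_monomial x, he.exponents_smul]

noncomputable def exponentsEquiv (he : IsQBasis K e) (he' : IsQBasis K e') :
    (Fin n → ℤ) ≃+ (Fin m → ℤ) where
  toFun k := he'.exponents (monomial e k)
  invFun l := he.exponents (monomial e' l)
  left_inv k := by
    simp only [exponents_monomial_exponents, exponents_monomial]
  right_inv l := by
    simp only [exponents_monomial_exponents, exponents_monomial]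
  map_add' a b := by
    simp only [monomial_add, exponents_mul]

end IsQBasis

/-- Any two bases for a quantity space have the same cardinality. -/
theorem stmt19 {K Q : Type*} [Field K] [CommMonoid Q] [ScalableMonoid K Q]
    {n m : ℕ} (e : Fin n → Qˣ) (e' : Fin m → Qˣ)
    (he : IsQBasis K e) (he' : IsQBasis K e') : n = m := by
  simpa only [Module.finrank_fin_fun] using
    (he.exponentsEquiv he').toIntLinearEquiv.finrank_eq
end
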